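/- arXiv:math/0702495 — 5 statements merged into one kernel-verified Lean document; each statement's English description precedes it below -/
import Mathlib

section
/- Let f be a strictly increasing element of PL(ℝ). Then f is strongly reversible in PL(ℝ) (i.e., there is an involution σ ∈ PL(ℝ) with σ ∘ f ∘ σ = f⁻¹) if and only if there is a strictly decreasing element h of PL(ℝ) with h ∘ f ∘ h⁻¹ = f⁻¹. -/
/-- `f` is a homeomorphism of `ℝ`: a bijection of `ℝ` that is continuous in both directions. -/
def IsHomeo (f : Equiv.Perm ℝ) : Prop := Continuous f ∧ Continuous f.symm

/-- `f` is locally affine at `x`: it agrees with an affine map on a neighbourhood of `x`. -/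
def IsLocallyAffineAt (f : ℝ → ℝ) (x : ℝ) : Prop :=
  ∃ a b : ℝ, ∀ᶠ y in nhds x, f y = a * y + b

/-- Membership in PLF(ℝ): a homeomorphism of `ℝ` that is locally affine at all but
finitely many points. -/
def InPLF (f : Equiv.Perm ℝ) : Prop :=
  IsHomeo f ∧ {x : ℝ | ¬ IsLocallyAffineAt (⇑f) x}.Finite

/-- Membership in PL(ℝ): a homeomorphism of `ℝ` whose set of points of non-local-affinity
has no accumulation point in `ℝ`. -/
def InPL (f : Equiv.Perm ℝ) : Prop :=
  IsHomeo f ∧ ∀ x : ℝ, ¬ AccPt x (Filter.principal {y : ℝ | ¬ IsLocallyAffineAt (⇑f) y})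

open Filter Set Topology

/-!
Forward direction: a PL involution is a homeomorphism, hence monotone or antitone, and an
increasing involution of `ℝ` is the identity; in that case `f = f⁻¹`, so `f = 1`.

Backward direction, given a decreasing reverser `h`. If `f` has no fixed point, say `x < f x`,
then `f` is conjugate in PL(ℝ) to `x ↦ x + 1` by the chart that maps `[n, n + 1)` affinely onto
`[0, f 0)` and then by `f ^ n`; the translation is reversed by `x ↦ -x`. If `f` has a fixed
point, let `p` be the fixed point of `h` and glue `h⁻¹` on `(-∞, p]` to `h` on `(p, ∞)`. This
involution reverses `f` provided `h²` fixes every `v` with `p` between `v` and `f v`. Here the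
PL hypothesis enters: `h²` commutes with `f` and fixes `p`, so it fixes the monotone `f`-orbit of
`p` (of `f⁻¹` if `f p < p`), which is bounded by a fixed point of `f` and so converges to some
`a`. Near `a`, `h²` is affine on a left interval containing two orbit points, hence the identity
there, and an iterate of `f` carries each such `v` into that interval.
-/

section LocallyAffine

variable {f g u : ℝ → ℝ} {x : ℝ}

lemma isLocallyAffineAt_affine (a b x : ℝ) : IsLocallyAffineAt (fun y => a * y + b) x :=
  ⟨a, b, .of_forall fun _ => rfl⟩

lemma IsLocallyAffineAt.congr (hg : IsLocallyAffineAt g x) (hfg : f =ᶠ[𝓝 x] g) :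
    IsLocallyAffineAt f x := by
  obtain ⟨a, b, hab⟩ := hg
  exact ⟨a, b, hfg.trans hab⟩

lemma IsLocallyAffineAt.continuousAt (hf : IsLocallyAffineAt f x) : ContinuousAt f x := by
  obtain ⟨a, b, hab⟩ := hf
  exact (show ContinuousAt (fun y => a * y + b) x by fun_prop).congr (EventuallyEq.symm hab)

lemma IsLocallyAffineAt.comp (hg : IsLocallyAffineAt g (u x)) (hu : IsLocallyAffineAt u x) :
    IsLocallyAffineAt (g ∘ u) x := by
  have hcont := hu.continuousAt
  obtain ⟨a, b, hab⟩ := hg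
  obtain ⟨c, d, hcd⟩ := hu
  refine ⟨a * c, a * d + b, ?_⟩
  filter_upwards [hcont hab, hcd] with y (h1 : g (u y) = a * u y + b) h2
  rw [Function.comp_apply, h1, h2]
  ring

lemma IsLocallyAffineAt.symm {e : Equiv.Perm ℝ} (hcont : Continuous e.symm)
    (he : IsLocallyAffineAt e x) : IsLocallyAffineAt e.symm (e x) := by
  obtain ⟨a, b, hab⟩ := he
  have ha : a ≠ 0 := by
    rintro rfl
    obtain ⟨y, hy, hyx⟩ := ((hab.filter_mono nhdsWithin_le_nhds).and
      (self_mem_nhdsWithin : {x}ᶜ ∈ 𝓝[≠] x)).exists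
    have hx := hab.self_of_nhds
    simp only [zero_mul, zero_add] at hx hy
    exact hyx (e.injective (hy.trans hx.symm))
  refine ⟨a⁻¹, -b / a, ?_⟩
  have hlim : Tendsto e.symm (𝓝 (e x)) (𝓝 x) := by
    simpa using hcont.tendsto (e x)
  filter_upwards [hlim hab] with y (hy : e (e.symm y) = a * e.symm y + b)
  rw [Equiv.apply_symm_apply] at hy
  field_simp
  linarith

lemma exists_affine_of_isLocallyAffineAt {s : Set ℝ} (hs : IsOpen s) (hs' : IsPreconnected s)
    (hg : ∀ y ∈ s, IsLocallyAffineAt g y) : ∃ A B : ℝ, ∀ y ∈ s, g y = A * y + B := by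
  have hderiv : ∀ y ∈ s, ∃ a, ∀ᶠ z in 𝓝 y, HasDerivAt g a z := by
    intro y hy
    obtain ⟨a, b, hab⟩ := hg y hy
    refine ⟨a, hab.eventually_nhds.mono fun z hz => ?_⟩
    exact ((hasDerivAt_id z).const_mul a |>.add_const b |>.congr_of_eventuallyEq hz).congr_deriv
      (mul_one a)
  have hdiff : DifferentiableOn ℝ g s := fun y hy =>
    let ⟨_, ha⟩ := hderiv y hy; ha.self_of_nhds.differentiableAt.differentiableWithinAt
  have hderiv_const : ∀ y ∈ s, deriv g =ᶠ[𝓝 y] fun _ => deriv g y := by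
    intro y hy
    obtain ⟨a, ha⟩ := hderiv y hy
    filter_upwards [ha] with z hz
    rw [hz.deriv, ha.self_of_nhds.deriv]
  obtain ⟨A, hA⟩ := hs.exists_is_const_of_deriv_eq_zero hs'
    (fun y hy => (hasDerivAt_const y (deriv g y) |>.congr_of_eventuallyEq (hderiv_const y hy))
      |>.differentiableAt.differentiableWithinAt)
    (fun y hy => by simp [(hderiv_const y hy).deriv_eq])
  obtain ⟨B, hB⟩ := hs.exists_eq_add_of_deriv_eq hs' hdiff
    (g := fun y => A * y) (by fun_prop) (fun y hy => by simp [hA y hy])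
  exact ⟨A, B, hB⟩

end LocallyAffine

def IsPiecewiseAffineAt (f : ℝ → ℝ) (x : ℝ) : Prop :=
  ∀ᶠ y in 𝓝[≠] x, IsLocallyAffineAt f y

lemma inPL_iff {f : Equiv.Perm ℝ} : InPL f ↔ IsHomeo f ∧ ∀ x, IsPiecewiseAffineAt f x := by
  simp only [InPL, IsPiecewiseAffineAt, accPt_iff_frequently_nhdsNE, not_frequently,
    mem_ofPred_eq, not_not]

section PiecewiseAffine

variable {f g u F G : ℝ → ℝ} {x : ℝ}

lemma tendsto_nhdsNE_of_injective (hu : ContinuousAt u x) (hinj : u.Injective) :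
    Tendsto u (𝓝[≠] x) (𝓝[≠] (u x)) :=
  tendsto_nhdsWithin_of_tendsto_nhds_of_eventually_within _ (hu.mono_left nhdsWithin_le_nhds)
    (eventually_nhdsWithin_of_forall fun _ hy => hinj.ne hy)

lemma IsPiecewiseAffineAt.comp (hg : IsPiecewiseAffineAt g (u x)) (hu : IsPiecewiseAffineAt u x)
    (huc : ContinuousAt u x) (hinj : u.Injective) : IsPiecewiseAffineAt (g ∘ u) x := by
  filter_upwards [tendsto_nhdsNE_of_injective huc hinj hg, hu] with y hgy huy
  exact hgy.comp huy

lemma eventually_eventuallyEq_nhds_of_nhdsWithin {s : Set ℝ} (hs : IsOpen s)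
    (h : f =ᶠ[𝓝[s] x] F) : ∀ᶠ y in 𝓝[s] x, f =ᶠ[𝓝 y] F := by
  filter_upwards [eventually_eventually_nhdsWithin.2 h, self_mem_nhdsWithin] with y hy hys
  rwa [hs.nhdsWithin_eq hys] at hy

lemma IsPiecewiseAffineAt.of_eventuallyEq (hF : IsPiecewiseAffineAt F x)
    (hG : IsPiecewiseAffineAt G x) (hl : f =ᶠ[𝓝[<] x] F) (hr : f =ᶠ[𝓝[>] x] G) :
    IsPiecewiseAffineAt f x := by
  rw [IsPiecewiseAffineAt, ← nhdsLT_sup_nhdsGT, eventually_sup]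
  constructor
  · filter_upwards [eventually_eventuallyEq_nhds_of_nhdsWithin isOpen_Iio hl,
      hF.filter_mono (nhdsWithin_mono _ fun _ hy => ne_of_lt hy)] with y hfy hFy
    exact hFy.congr hfy
  · filter_upwards [eventually_eventuallyEq_nhds_of_nhdsWithin isOpen_Ioi hr,
      hG.filter_mono (nhdsWithin_mono _ fun _ hy => ne_of_gt hy)] with y hfy hGy
    exact hGy.congr hfy

lemma IsPiecewiseAffineAt.congr (hF : IsPiecewiseAffineAt F x) (h : f =ᶠ[𝓝 x] F) :
    IsPiecewiseAffineAt f x :=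
  hF.of_eventuallyEq hF (h.filter_mono nhdsWithin_le_nhds) (h.filter_mono nhdsWithin_le_nhds)

lemma IsPiecewiseAffineAt.ite (hF : IsPiecewiseAffineAt F x) (hG : IsPiecewiseAffineAt G x)
    (p : ℝ) : IsPiecewiseAffineAt (fun y => if y ≤ p then F y else G y) x := by
  rcases lt_trichotomy x p with hxp | rfl | hxp
  · exact hF.congr <| by
      filter_upwards [Iio_mem_nhds hxp] with y hy using if_pos (le_of_lt hy)
  · exact hF.of_eventuallyEq hG (eventually_nhdsWithin_of_forall fun y hy => if_pos (le_of_lt hy))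
      (eventually_nhdsWithin_of_forall fun y hy => if_neg (not_le.2 hy))
  · exact hG.congr <| by
      filter_upwards [Ioi_mem_nhds hxp] with y hy using if_neg (not_le.2 hy)

end PiecewiseAffine

section PLGroup

lemma InPL.continuous {f : Equiv.Perm ℝ} (hf : InPL f) : Continuous f := hf.1.1

lemma InPL.isPiecewiseAffineAt {f : Equiv.Perm ℝ} (hf : InPL f) (x : ℝ) :
    IsPiecewiseAffineAt f x :=
  (inPL_iff.1 hf).2 x

lemma inPL_of_isLocallyAffineAt {e : Equiv.Perm ℝ} (hc : Continuous e)
    (hc' : Continuous e.symm) (he : ∀ x, IsLocallyAffineAt e x) : InPL e :=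
  inPL_iff.2 ⟨⟨hc, hc'⟩, fun _ => .of_forall he⟩

lemma InPL.mul {f g : Equiv.Perm ℝ} (hf : InPL f) (hg : InPL g) : InPL (f * g) := by
  obtain ⟨⟨hfc, hfc'⟩, hfpa⟩ := inPL_iff.1 hf
  obtain ⟨⟨hgc, hgc'⟩, hgpa⟩ := inPL_iff.1 hg
  exact inPL_iff.2 ⟨⟨hfc.comp hgc, hgc'.comp hfc'⟩,
    fun x => (hfpa (g x)).comp (hgpa x) hgc.continuousAt g.injective⟩

lemma InPL.inv {f : Equiv.Perm ℝ} (hf : InPL f) : InPL f⁻¹ := by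
  obtain ⟨⟨hfc, hfc'⟩, hfpa⟩ := inPL_iff.1 hf
  refine inPL_iff.2 ⟨⟨hfc', hfc⟩, fun x => ?_⟩
  filter_upwards [tendsto_nhdsNE_of_injective hfc'.continuousAt f.symm.injective
    (hfpa (f.symm x))] with y hy
  simpa using hy.symm hfc'

def plGroup : Subgroup (Equiv.Perm ℝ) where
  carrier := {f | InPL f}
  mul_mem' := InPL.mul
  one_mem' := inPL_of_isLocallyAffineAt continuous_id continuous_id fun x =>
    (isLocallyAffineAt_affine 1 0 x).congr (.of_forall fun y => by simp)
  inv_mem' := InPL.inv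

lemma mem_plGroup {f : Equiv.Perm ℝ} : f ∈ plGroup ↔ InPL f := Iff.rfl

end PLGroup

section StronglyReversible

variable {G : Type*} [Group G] {H : Subgroup G} {f φ : G}

def IsStronglyReversibleIn (H : Subgroup G) (f : G) : Prop :=
  ∃ σ ∈ H, σ * σ = 1 ∧ σ * f * σ = f⁻¹

lemma IsStronglyReversibleIn.inv (hf : IsStronglyReversibleIn H f) :
    IsStronglyReversibleIn H f⁻¹ := by
  obtain ⟨σ, hσH, hσσ, hσf⟩ := hf
  refine ⟨σ, hσH, hσσ, ?_⟩
  rw [inv_inv, ← hσf]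
  calc σ * (σ * f * σ) * σ = (σ * σ) * f * (σ * σ) := by group
    _ = f := by rw [hσσ, one_mul, mul_one]

lemma IsStronglyReversibleIn.conj (hf : IsStronglyReversibleIn H f) (hφ : φ ∈ H) :
    IsStronglyReversibleIn H (φ * f * φ⁻¹) := by
  obtain ⟨σ, hσH, hσσ, hσf⟩ := hf
  refine ⟨φ * σ * φ⁻¹, H.mul_mem (H.mul_mem hφ hσH) (H.inv_mem hφ), ?_, ?_⟩
  · simp [mul_assoc, ← mul_assoc σ σ, hσσ]
  · simp only [mul_inv_rev, inv_inv, mul_assoc, ← hσf]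
    group

end StronglyReversible

lemma Monotone.eq_id_of_involutive {α : Type*} [LinearOrder α] {g : α → α} (hg : Monotone g)
    (hinv : Function.Involutive g) : g = id := by
  funext x
  rcases lt_trichotomy (g x) x with hlt | heq | hgt
  · have := hg hlt.le
    rw [hinv x] at this
    exact absurd this (not_le.2 hlt)
  · exact heq
  · have := hg hgt.le
    rw [hinv x] at this
    exact absurd this (not_le.2 hgt)

lemma Equiv.Perm.eq_one_of_monotone_of_mul_self {α : Type*} [LinearOrder α] {g : Equiv.Perm α}
    (hg : Monotone g) (hgg : g * g = 1) : g = 1 :=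
  DFunLike.coe_injective <| hg.eq_id_of_involutive fun x => by simpa using Equiv.congr_fun hgg x

lemma inPL_neg : InPL (Equiv.neg ℝ) :=
  inPL_of_isLocallyAffineAt continuous_neg continuous_neg fun x =>
    (isLocallyAffineAt_affine (-1) 0 x).congr (.of_forall fun y => by simp)

lemma exists_strictAnti_reverser_of_isStronglyReversibleIn {f : Equiv.Perm ℝ}
    (hfm : StrictMono f) (hf : IsStronglyReversibleIn plGroup f) :
    ∃ h : Equiv.Perm ℝ, InPL h ∧ StrictAnti h ∧ h * f * h⁻¹ = f⁻¹ := by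
  obtain ⟨σ, hσ, hσσ, hσf⟩ := hf
  rcases (mem_plGroup.1 hσ).continuous.strictMono_of_inj σ.injective with hmono | hanti
  · have hσ1 : σ = 1 := Equiv.Perm.eq_one_of_monotone_of_mul_self hmono.monotone hσσ
    rw [hσ1, one_mul, mul_one] at hσf
    have hf1 : f = 1 :=
      Equiv.Perm.eq_one_of_monotone_of_mul_self hfm.monotone (by nth_rw 2 [hσf]; simp)
    exact ⟨Equiv.neg ℝ, inPL_neg, fun _ _ => neg_lt_neg, by simp [hf1]⟩
  · exact ⟨σ, hσ, hanti, by rwa [inv_eq_of_mul_eq_one_right hσσ]⟩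

section PermOrder

variable {α : Type*} [LinearOrder α] {f : Equiv.Perm α}

lemma StrictMono.perm_inv (hf : StrictMono f) : StrictMono ⇑f⁻¹ :=
  fun x y hxy => hf.lt_iff_lt.1 (by simpa using hxy)

lemma StrictAnti.perm_inv (hf : StrictAnti f) : StrictAnti ⇑f⁻¹ :=
  fun x y hxy => hf.lt_iff_gt.1 (by simpa using hxy)

lemma StrictMono.perm_zpow (hf : StrictMono f) (n : ℤ) : StrictMono ⇑(f ^ n) := by
  induction n using Int.induction_on with
  | zero => exact strictMono_id
  | succ k ih => rw [zpow_add_one, Equiv.Perm.coe_mul]; exact ih.comp hf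
  | pred k ih => rw [zpow_sub_one, Equiv.Perm.coe_mul]; exact ih.comp hf.perm_inv

lemma StrictMono.zpow_apply_of_lt_apply (hf : StrictMono f) (hlt : ∀ x, x < f x) (x : α) :
    StrictMono fun n : ℤ => (f ^ n) x :=
  strictMono_int_of_lt_succ fun n => by
    rw [zpow_add_one, Equiv.Perm.mul_apply]
    exact hf.perm_zpow n (hlt x)

end PermOrder

lemma not_bddAbove_range_iterate {α : Type*} [ConditionallyCompleteLinearOrder α]
    [TopologicalSpace α] [OrderTopology α] {g : α → α} (hg : Continuous g)
    (hlt : ∀ x, x < g x) (x : α) : ¬ BddAbove (range fun n => g^[n] x) := by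
  intro hbdd
  have hmono : Monotone fun n => g^[n] x := monotone_nat_of_le_succ fun n => by
    rw [Function.iterate_succ_apply']
    exact (hlt _).le
  exact (hlt _).ne' (isFixedPt_of_tendsto_iterate (tendsto_atTop_ciSup hmono hbdd) hg.continuousAt)

lemma Monotone.exists_apply_le_lt_apply_succ {α : Type*} [LinearOrder α] {o : ℤ → α}
    (ho : Monotone o) (y : α) (hup : ∃ n, y < o n) (hdown : ∃ n, o n ≤ y) : ∃ n, o n ≤ y ∧ y < o (n + 1) := by
  obtain ⟨m, hm⟩ := hup
  obtain ⟨n, hn, hmax⟩ := Int.exists_greatest_of_bdd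
    ⟨m, fun k hk => le_of_lt (ho.reflect_lt (hk.trans_lt hm))⟩ hdown
  exact ⟨n, hn, lt_of_not_ge fun h => by linarith [hmax _ h]⟩

section OrbitChart

variable {f : Equiv.Perm ℝ}

lemma exists_zpow_apply_le_lt (hf : IsHomeo f) (hfm : StrictMono f) (hlt : ∀ x, x < f x) (x y : ℝ) :
    ∃ n : ℤ, (f ^ n) x ≤ y ∧ y < (f ^ (n + 1)) x := by
  refine Monotone.exists_apply_le_lt_apply_succ ?_ y ?_ ?_
  · exact (hfm.zpow_apply_of_lt_apply hlt x).monotone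
  · by_contra! h
    refine not_bddAbove_range_iterate hf.1 hlt x ⟨y, ?_⟩
    rintro _ ⟨n, rfl⟩
    simpa [Equiv.Perm.iterate_eq_pow] using h n
  · by_contra! h
    refine not_bddAbove_range_iterate (α := ℝᵒᵈ) (g := ⇑f⁻¹) hf.2 ?_ x ⟨y, ?_⟩
    · intro z
      change f⁻¹ (OrderDual.ofDual z) < OrderDual.ofDual z
      simpa using hlt (f⁻¹ (OrderDual.ofDual z))
    · rintro _ ⟨n, rfl⟩
      change y ≤ (⇑f⁻¹)^[n] x
      rw [Equiv.Perm.iterate_eq_pow, inv_pow, ← zpow_natCast, ← zpow_neg]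
      exact (h (-n)).le

noncomputable def orbitChart (f : Equiv.Perm ℝ) (x : ℝ) : ℝ := (f ^ ⌊x⌋) (f 0 * Int.fract x)

lemma orbitChart_add_one (x : ℝ) : orbitChart f (x + 1) = f (orbitChart f x) := by
  rw [orbitChart, orbitChart, Int.floor_add_one, Int.fract_add_one, ← mul_self_zpow,
    Equiv.Perm.mul_apply]

lemma orbitChart_eq_of_mem_Ico {n : ℤ} {x : ℝ} (hx : x ∈ Ico (n : ℝ) (n + 1)) :
    orbitChart f x = (f ^ n) (f 0 * (x - n)) := by
  rw [orbitChart, Int.fract, Int.floor_eq_iff.2 hx]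

lemma strictMono_orbitChart (hfm : StrictMono f) (hlt : ∀ x, x < f x) :
    StrictMono (orbitChart f) := by
  intro x y hxy
  have hc : 0 < f 0 := hlt 0
  rcases (Int.floor_mono hxy.le).eq_or_lt with hn | hn
  · rw [orbitChart, orbitChart, hn]
    refine hfm.perm_zpow _ (mul_lt_mul_of_pos_left ?_ hc)
    rw [Int.fract, Int.fract, hn]
    linarith
  · calc orbitChart f x < (f ^ ⌊x⌋) (f 0) :=
          hfm.perm_zpow _ (mul_lt_of_lt_one_right hc (Int.fract_lt_one x))
      _ = (f ^ (⌊x⌋ + 1)) 0 := by rw [zpow_add_one, Equiv.Perm.mul_apply]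
      _ ≤ (f ^ ⌊y⌋) 0 := (hfm.zpow_apply_of_lt_apply hlt 0).monotone hn
      _ ≤ orbitChart f y :=
          (hfm.perm_zpow _).monotone (mul_nonneg hc.le (Int.fract_nonneg y))

lemma surjective_orbitChart (hf : IsHomeo f) (hfm : StrictMono f) (hlt : ∀ x, x < f x) :
    Function.Surjective (orbitChart f) := by
  intro y
  obtain ⟨n, hn, hn'⟩ := exists_zpow_apply_le_lt hf hfm hlt 0 y
  have hc : 0 < f 0 := hlt 0
  set t := (f ^ n)⁻¹ y with ht
  have hyt : (f ^ n) t = y := by simp [ht]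
  have ht0 : 0 ≤ t := (hfm.perm_zpow n).le_iff_le.1 (hyt ▸ hn)
  have htc : t < f 0 := by
    rw [zpow_add_one, Equiv.Perm.mul_apply] at hn'
    exact (hfm.perm_zpow n).lt_iff_lt.1 (hyt ▸ hn')
  refine ⟨n + t / f 0, ?_⟩
  rw [orbitChart_eq_of_mem_Ico (n := n) ⟨?_, ?_⟩]
  · rw [add_sub_cancel_left, mul_div_cancel₀ _ hc.ne', hyt]
  · have := div_nonneg ht0 hc.le
    linarith
  · have := (div_lt_one hc).2 htc
    linarith

lemma isPiecewiseAffineAt_orbitChart (hf : InPL f) (hc : f 0 ≠ 0) (x : ℝ) :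
    IsPiecewiseAffineAt (orbitChart f) x := by
  have hpiece (k : ℤ) : IsPiecewiseAffineAt (fun y => (f ^ k) (f 0 * (y - k))) x := by
    have hu : Function.Injective fun y : ℝ => f 0 * (y - k) := fun a b hab => by
      simpa [hc] using hab
    exact ((mem_plGroup.1 (zpow_mem hf k)).isPiecewiseAffineAt _).comp
      (.of_forall fun y => (isLocallyAffineAt_affine (f 0) (-(f 0 * k)) y).congr
        (.of_forall fun _ => by ring))
      (by fun_prop) hu
  refine (hpiece (⌈x⌉ - 1)).of_eventuallyEq (hpiece ⌊x⌋) ?_ ?_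
  · filter_upwards [Ioo_mem_nhdsLT (show (⌈x⌉ - 1 : ℝ) < x by linarith [Int.ceil_lt_add_one x])]
      with y hy
    exact orbitChart_eq_of_mem_Ico ⟨by push_cast; linarith [hy.1],
      by push_cast; linarith [hy.2, Int.le_ceil x]⟩
  · filter_upwards [Ioo_mem_nhdsGT (Int.lt_floor_add_one x)] with y hy
    exact orbitChart_eq_of_mem_Ico ⟨(Int.floor_le x).trans hy.1.le, hy.2⟩

end OrbitChart

section FixedPointFree

variable {f : Equiv.Perm ℝ}

lemma exists_inPL_conj_addRight_one (hf : InPL f) (hfm : StrictMono f) (hlt : ∀ x, x < f x) :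
    ∃ φ : Equiv.Perm ℝ, InPL φ ∧ f = φ * Equiv.addRight 1 * φ⁻¹ := by
  let e := StrictMono.orderIsoOfSurjective (orbitChart f) (strictMono_orbitChart hfm hlt)
    (surjective_orbitChart hf.1 hfm hlt)
  refine ⟨e.toEquiv, inPL_iff.2 ⟨⟨e.continuous, e.symm.continuous⟩,
    isPiecewiseAffineAt_orbitChart hf (hlt 0).ne'⟩, ?_⟩
  ext x
  have hx : orbitChart f (e.symm x) = x := e.apply_symm_apply x
  simp [e, orbitChart_add_one, hx]

lemma isStronglyReversibleIn_addRight (t : ℝ) :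
    IsStronglyReversibleIn plGroup (Equiv.addRight t) :=
  ⟨Equiv.neg ℝ, inPL_neg, by ext; simp, by ext; simp; ring⟩

lemma isStronglyReversibleIn_of_lt_apply (hf : InPL f) (hfm : StrictMono f)
    (hlt : ∀ x, x < f x) : IsStronglyReversibleIn plGroup f := by
  obtain ⟨φ, hφ, rfl⟩ := exists_inPL_conj_addRight_one hf hfm hlt
  exact (isStronglyReversibleIn_addRight 1).conj hφ

lemma isStronglyReversibleIn_of_forall_ne (hf : InPL f) (hfm : StrictMono f)
    (hne : ∀ x, f x ≠ x) : IsStronglyReversibleIn plGroup f := by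
  have hsign : (∀ x, x < f x) ∨ ∀ x, f x < x := by
    by_contra! h
    obtain ⟨x, hx⟩ := mem_range_of_exists_le_of_exists_ge (c := 0) (f := fun x => f x - x)
      (hf.continuous.sub continuous_id) (h.1.imp fun _ => sub_nonpos.2)
      (h.2.imp fun _ => sub_nonneg.2)
    exact hne x (sub_eq_zero.1 hx)
  rcases hsign with hlt | hgt
  · exact isStronglyReversibleIn_of_lt_apply hf hfm hlt
  · have hlt (x : ℝ) : x < f⁻¹ x := by simpa using hgt (f⁻¹ x)
    simpa using (isStronglyReversibleIn_of_lt_apply hf.inv hfm.perm_inv hlt).inv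

end FixedPointFree

section FixedPoint

lemma exists_fixed_of_antitone {h : ℝ → ℝ} (hc : Continuous h) (ha : Antitone h) :
    ∃ p, h p = p := by
  obtain ⟨p, hp⟩ := mem_range_of_exists_le_of_exists_ge (c := 0) (f := fun x => h x - x)
    (hc.sub continuous_id)
    ⟨max 0 (h 0), by linarith [ha (le_max_left 0 (h 0)), le_max_right 0 (h 0)]⟩
    ⟨min 0 (h 0), by linarith [ha (min_le_left 0 (h 0)), min_le_right 0 (h 0)]⟩
  exact ⟨p, sub_eq_zero.1 hp⟩

lemma IsPiecewiseAffineAt.exists_affine_left {g : ℝ → ℝ} {a : ℝ}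
    (hg : IsPiecewiseAffineAt g a) : ∃ q < a, ∃ A B : ℝ, ∀ y ∈ Ioo q a, g y = A * y + B := by
  obtain ⟨q, hqa, hq⟩ := mem_nhdsLT_iff_exists_Ioo_subset.1
    (hg.filter_mono (nhdsWithin_mono _ fun _ hy => ne_of_lt hy))
  exact ⟨q, hqa, exists_affine_of_isLocallyAffineAt isOpen_Ioo isPreconnected_Ioo hq⟩

lemma apply_eq_self_of_commute {f g : ℝ → ℝ} (hfm : StrictMono f)
    (hg : ∀ x, IsPiecewiseAffineAt g x) (hcomm : Function.Commute f g) {p z : ℝ} (hgp : g p = p)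
    (hp : p < f p) (hpz : p ≤ z) (hfz : f z = z) {w : ℝ} (hwp : w ≤ p) (hpw : p ≤ f w) :
    g w = w := by
  set u := fun n => f^[n] p
  have hu : StrictMono u := hfm.strictMono_iterate_of_lt_map hp
  have hbdd : BddAbove (range u) := ⟨z, by
    rintro _ ⟨n, rfl⟩
    simpa [u, Function.iterate_fixed hfz n] using (hfm.iterate n).monotone hpz⟩
  set a := ⨆ n, u n
  have hlt (n : ℕ) : u n < a := (hu n.lt_succ_self).trans_le (le_ciSup hbdd _)
  obtain ⟨q, hqa, A, B, hAB⟩ := (hg a).exists_affine_left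
  obtain ⟨m, hm⟩ : ∃ m, q < u m :=
    ((tendsto_order.1 (tendsto_atTop_ciSup hu.monotone hbdd)).1 q hqa).exists
  have hfix (n : ℕ) : g (u n) = u n := by
    simp only [u, ← (hcomm.iterate_left n) p, hgp]
  have hid : ∀ y ∈ Ioo q a, g y = y := by
    have h1 := hAB (u m) ⟨hm, hlt m⟩
    have h2 := hAB (u (m + 1)) ⟨hm.trans (hu m.lt_succ_self), hlt _⟩
    rw [hfix] at h1 h2
    have hA : A = 1 := by
      have : (A - 1) * (u (m + 1) - u m) = 0 := by linear_combination h1 - h2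
      exact sub_eq_zero.1 ((mul_eq_zero.1 this).resolve_right
        (sub_ne_zero.2 (hu m.lt_succ_self).ne'))
    have hB : B = 0 := by rw [hA] at h1; linarith
    intro y hy
    rw [hAB y hy, hA, hB, one_mul, add_zero]
  have hw : f^[m + 1] w ∈ Ioo q a := by
    refine ⟨hm.trans_le ?_, ((hfm.iterate (m + 1)).monotone hwp).trans_lt (hlt _)⟩
    rw [Function.iterate_succ_apply]
    exact (hfm.iterate m).monotone hpw
  exact (hfm.iterate (m + 1)).injective (by rw [(hcomm.iterate_left (m + 1)) w, hid _ hw])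

end FixedPoint

section Reverser

variable {f h : Equiv.Perm ℝ}

lemma commute_mul_self_of_conj_eq_inv (hrev : h * f * h⁻¹ = f⁻¹) : Commute f (h * h) := by
  have h1 : h * f = f⁻¹ * h := mul_inv_eq_iff_eq_mul.1 hrev
  have h2 : h * f⁻¹ = f * h := mul_inv_eq_iff_eq_mul.1 <| calc
    h * f⁻¹ * h⁻¹ = (h * f * h⁻¹)⁻¹ := by group
    _ = f := by rw [hrev, inv_inv]
  calc f * (h * h) = (h * f⁻¹) * h := by rw [h2, mul_assoc]
    _ = h * h * f := by rw [mul_assoc, ← h1, mul_assoc]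

lemma apply_apply_of_conj_eq_inv (hrev : h * f * h⁻¹ = f⁻¹) (u : ℝ) : h (f u) = f⁻¹ (h u) := by
  simpa using Equiv.congr_fun hrev (h u)

lemma apply_apply_eq_self_of_mem_uIcc (hfm : StrictMono f) (hh : InPL h) (hha : StrictAnti h)
    (hrev : h * f * h⁻¹ = f⁻¹) {p w₀ : ℝ} (hp : h p = p) (hw₀ : f w₀ = w₀) {v : ℝ}
    (hv : p ∈ uIcc v (f v)) : h (h v) = v := by
  have hcomm := commute_mul_self_of_conj_eq_inv hrev
  have hg := (hh.mul hh).isPiecewiseAffineAt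
  have hgp : (h * h) p = p := by simp [hp]
  obtain ⟨z, hpz, hfz⟩ : ∃ z, p ≤ z ∧ f z = z := by
    rcases le_total p w₀ with hpw | hwp
    · exact ⟨w₀, hpw, hw₀⟩
    · refine ⟨h w₀, hp ▸ hha.antitone hwp, ?_⟩
      rw [eq_comm, ← Equiv.Perm.inv_eq_iff_eq, ← apply_apply_of_conj_eq_inv hrev, hw₀]
  rcases lt_trichotomy p (f p) with hlt | heq | hgt
  · obtain ⟨hvp, hpv⟩ : v ≤ p ∧ p ≤ f v := (mem_uIcc.1 hv).resolve_right fun ⟨h1, h2⟩ =>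
      (hlt.trans_le (hfm.monotone h2)).not_ge h1
    exact apply_eq_self_of_commute hfm hg (fun x => Equiv.congr_fun hcomm.eq x) hgp hlt hpz hfz
      hvp hpv
  · have : v = p := by
      rcases mem_uIcc.1 hv with ⟨h1, h2⟩ | ⟨h1, h2⟩
      · exact le_antisymm h1 (hfm.le_iff_le.1 (heq ▸ h2))
      · exact le_antisymm (hfm.le_iff_le.1 (heq ▸ h1)) h2
    rw [this, hp, hp]
  · obtain ⟨hfvp, hpv⟩ : f v ≤ p ∧ p ≤ v := (mem_uIcc.1 hv).resolve_left fun ⟨h1, h2⟩ =>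
      (hfm.monotone h1).trans_lt hgt |>.not_ge h2
    have hfv : (h * h) (f v) = f v := apply_eq_self_of_commute hfm.perm_inv hg
      (fun x => Equiv.congr_fun hcomm.inv_left.eq x) hgp (by simpa using hfm.perm_inv hgt)
      hpz (Equiv.Perm.inv_eq_iff_eq.2 hfz.symm) hfvp (by simpa using hpv)
    exact f.injective (by simpa using (Equiv.congr_fun hcomm.eq v).trans hfv)

lemma isStronglyReversibleIn_of_conj_eq_inv_of_fixed (hh : InPL h)
    (hha : StrictAnti h) (hrev : h * f * h⁻¹ = f⁻¹) {p : ℝ} (hp : h p = p)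
    (hsq : ∀ v, p ∈ uIcc v (f v) → h (h v) = v) : IsStronglyReversibleIn plGroup f := by
  set s : ℝ → ℝ := fun x => if x ≤ p then h⁻¹ x else h x
  have hpi : h⁻¹ p = p := by rw [Equiv.Perm.inv_eq_iff_eq, hp]
  have hhi : StrictAnti ⇑h⁻¹ := hha.perm_inv
  have s_le {x} (hx : x ≤ p) : s x = h⁻¹ x := if_pos hx
  have s_gt {x} (hx : ¬ x ≤ p) : s x = h x := if_neg hx
  have hinv : Function.Involutive s := by
    intro x
    by_cases hx : x ≤ p
    · rw [s_le hx]
      rcases hx.lt_or_eq with hx | rfl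
      · rw [s_gt (not_le.2 (hpi ▸ hhi hx))]
        simp
      · rw [hpi, s_le le_rfl, hpi]
    · rw [s_gt hx, s_le (hp ▸ (hha (not_le.1 hx)).le)]
      simp
  have hcont : Continuous s :=
    Continuous.if_le hh.inv.continuous hh.continuous continuous_id continuous_const
      fun x hx => by rw [hx, hpi, hp]
  refine ⟨hinv.toPerm, inPL_iff.2 ⟨⟨hcont, hcont⟩,
    fun x => (hh.inv.isPiecewiseAffineAt x).ite (hh.isPiecewiseAffineAt x) p⟩,
    Equiv.ext hinv, Equiv.ext fun x => ?_⟩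
  have hR := apply_apply_of_conj_eq_inv hrev
  obtain ⟨v, rfl⟩ := f.surjective x
  change s (f (s (f v))) = f⁻¹ (f v)
  rw [show f⁻¹ (f v) = v from f.symm_apply_apply v]
  by_cases hx : f v ≤ p
  · have h1 : f (h⁻¹ (f v)) = h⁻¹ v := h.injective (by simp [hR])
    rw [s_le hx, h1]
    by_cases hv : h⁻¹ v ≤ p
    · have hpv : p ≤ v := hhi.le_iff_ge.1 (by rwa [hpi])
      rw [s_le hv, Equiv.Perm.inv_eq_iff_eq, Equiv.Perm.inv_eq_iff_eq]
      exact (hsq v (mem_uIcc.2 (Or.inr ⟨hx, hpv⟩))).symm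
    · rw [s_gt hv]
      simp
  · rw [s_gt hx, hR, show f (f⁻¹ (h v)) = h v from f.apply_symm_apply _]
    by_cases hv : h v ≤ p
    · rw [s_le hv]
      simp
    · have hvp : v < p := hha.lt_iff_gt.1 (by rw [hp]; exact not_le.1 hv)
      rw [s_gt hv]
      exact hsq v (mem_uIcc.2 (Or.inl ⟨hvp.le, (not_le.1 hx).le⟩))

end Reverser

/-- A strictly increasing element of PL(ℝ) is strongly reversible in PL(ℝ) iff it is
reversed by a strictly decreasing element of PL(ℝ). -/
theorem stmt_7 (f : Equiv.Perm ℝ) (hf : InPL f) (hfm : StrictMono (⇑f)) :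
    (∃ σ : Equiv.Perm ℝ, InPL σ ∧ σ * σ = 1 ∧ σ * f * σ = f⁻¹) ↔
    (∃ h : Equiv.Perm ℝ, InPL h ∧ StrictAnti (⇑h) ∧ h * f * h⁻¹ = f⁻¹) := by
  refine ⟨exists_strictAnti_reverser_of_isStronglyReversibleIn hfm, ?_⟩
  rintro ⟨h, hh, hha, hrev⟩
  by_cases hfix : ∃ w, f w = w
  · obtain ⟨w₀, hw₀⟩ := hfix
    obtain ⟨p, hp⟩ := exists_fixed_of_antitone hh.continuous hha.antitone
    exact isStronglyReversibleIn_of_conj_eq_inv_of_fixed hh hha hrev hp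
      fun v hv => apply_apply_eq_self_of_mem_uIcc hfm hh hha hrev hp hw₀ hv
  · exact isStronglyReversibleIn_of_forall_ne hf hfm (not_exists.1 hfix)
end

section
/- Let f be a strictly increasing homeomorphism of ℝ. Then there exists a strictly decreasing homeomorphism τ of ℝ with τ ∘ τ = id and τ ∘ f ∘ τ = f if and only if there exists a strictly decreasing homeomorphism g of ℝ with g ∘ g = f. -/
open Function Set

theorem Antitone.continuous_of_surjective {α β : Type*} [LinearOrder α] [TopologicalSpace α]
    [OrderTopology α] [LinearOrder β] [TopologicalSpace β] [OrderTopology β] [DenselyOrdered β]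
    {f : α → β} (hf : Antitone f) (hs : Surjective f) : Continuous f :=
  Monotone.continuous_of_surjective (β := βᵒᵈ) hf hs

theorem StrictAnti.perm_symm {α : Type*} [LinearOrder α] {e : Equiv.Perm α}
    (he : StrictAnti e) : StrictAnti e.symm := fun x y h => by
  rwa [← he.lt_iff_gt, e.apply_symm_apply, e.apply_symm_apply]

theorem StrictAnti.isHomeo {τ : Equiv.Perm ℝ} (hτ : StrictAnti τ) : IsHomeo τ :=
  ⟨hτ.antitone.continuous_of_surjective τ.surjective,
    hτ.perm_symm.antitone.continuous_of_surjective τ.symm.surjective⟩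

theorem Antitone.exists_isFixedPt {c : ℝ → ℝ} (hc : Antitone c) (hcont : Continuous c) :
    ∃ p, IsFixedPt c p := by
  obtain ⟨p, hp⟩ : (0 : ℝ) ∈ range fun x => c x - x :=
    mem_range_of_exists_le_of_exists_ge (hcont.sub continuous_id)
      ⟨max 0 (c 0), by linarith [hc (le_max_left 0 (c 0)), le_max_right 0 (c 0)]⟩
      ⟨min 0 (c 0), by linarith [hc (min_le_left 0 (c 0)), min_le_right 0 (c 0)]⟩
  exact ⟨p, sub_eq_zero.mp hp⟩

theorem StrictAnti.isFixedPt_unique {α : Type*} [LinearOrder α] {c : α → α} (hc : StrictAnti c)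
    {p q : α} (hp : IsFixedPt c p) (hq : IsFixedPt c q) : p = q := by
  rcases le_total p q with h | h
  · exact le_antisymm h (by simpa only [hp.eq, hq.eq] using hc.antitone h)
  · exact le_antisymm (by simpa only [hp.eq, hq.eq] using hc.antitone h) h

theorem Equiv.Perm.exists_strictAnti_piecewise {α : Type*} [LinearOrder α] {u v : Equiv.Perm α}
    (hu : StrictAnti u) (hv : StrictAnti v) {p : α} (huv : u p = v p) :
    ∃ τ : Equiv.Perm α, StrictAnti τ ∧ (∀ x ≤ p, τ x = u x) ∧ ∀ x, p ≤ x → τ x = v x := by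
  classical
  set c : α → α := fun x => if x ≤ p then u x else v x
  have hcu : ∀ x ≤ p, c x = u x := fun x hx => if_pos hx
  have hcv : ∀ x, p ≤ x → c x = v x := fun x hx => by
    rcases hx.eq_or_lt with rfl | hx
    · exact (if_pos le_rfl).trans huv
    · exact if_neg hx.not_ge
  have hc : StrictAnti c :=
    StrictAntiOn.Iic_union_Ici (fun x hx y hy hxy => by rw [hcu x hx, hcu y hy]; exact hu hxy)
      (fun x hx y hy hxy => by rw [hcv x hx, hcv y hy]; exact hv hxy)
  have hsurj : Surjective c := by
    intro y
    rcases le_total (u p) y with hy | hy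
    · refine ⟨u.symm y, hcu _ ?_ |>.trans (u.apply_symm_apply y)⟩
      rwa [← hu.le_iff_ge, u.apply_symm_apply]
    · refine ⟨v.symm y, hcv _ ?_ |>.trans (v.apply_symm_apply y)⟩
      rwa [← hv.le_iff_ge, v.apply_symm_apply, ← huv]
  exact ⟨Equiv.ofBijective c ⟨hc.injective, hsurj⟩, hc, hcu, hcv⟩

theorem exists_strictAnti_sq_eq_of_involution {f τ : Equiv.Perm ℝ} (hf : StrictMono f)
    (hτ : StrictAnti τ) (hτ2 : τ * τ = 1) (hτf : τ * f * τ = f) :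
    ∃ g : Equiv.Perm ℝ, StrictAnti g ∧ g * g = f := by
  have hττ (x : ℝ) : τ (τ x) = x := DFunLike.congr_fun hτ2 x
  have hcomm : τ * f = f * τ :=
    calc τ * f = τ * f * (τ * τ) := by rw [hτ2, mul_one]
      _ = f * τ := by rw [← mul_assoc, hτf]
  obtain ⟨p, hp⟩ := hτ.antitone.exists_isFixedPt hτ.isHomeo.1
  have hfp : f p = p :=
    hτ.isFixedPt_unique (show τ (f p) = f p by rw [← Equiv.Perm.mul_apply, hcomm,
      Equiv.Perm.mul_apply, hp.eq]) hp
  obtain ⟨g, hg, hg_le, hg_ge⟩ := Equiv.Perm.exists_strictAnti_piecewise (u := f * τ)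
    (hf.comp_strictAnti hτ) hτ (show f (τ p) = τ p by rw [hp.eq, hfp])
  refine ⟨g, hg, Equiv.ext fun x => ?_⟩
  rcases le_total x p with hx | hx
  · have hpτ : p ≤ τ x := hp.eq ▸ hτ.antitone hx
    have hpfτ : p ≤ f (τ x) := hfp ▸ hf.monotone hpτ
    rw [Equiv.Perm.mul_apply, hg_le x hx, Equiv.Perm.mul_apply, hg_ge _ hpfτ,
      ← Equiv.Perm.mul_apply τ, ← Equiv.Perm.mul_apply, hτf]
  · have hτp : τ x ≤ p := hp.eq ▸ hτ.antitone hx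
    rw [Equiv.Perm.mul_apply, hg_ge x hx, hg_le _ hτp, Equiv.Perm.mul_apply, hττ]

theorem exists_strictAnti_involution_of_sq {g : Equiv.Perm ℝ} (hg : StrictAnti g) :
    ∃ τ : Equiv.Perm ℝ, StrictAnti τ ∧ τ * τ = 1 ∧ τ * (g * g) * τ = g * g := by
  obtain ⟨p, hp⟩ := hg.antitone.exists_isFixedPt hg.isHomeo.1
  have hp' : g.symm p = p := g.symm_apply_eq.mpr hp.eq.symm
  obtain ⟨τ, hτ, hτ_le, hτ_ge⟩ :=
    Equiv.Perm.exists_strictAnti_piecewise hg.perm_symm hg (hp'.trans hp.eq.symm)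
  have hle_g {x : ℝ} (hx : p ≤ x) : g x ≤ p := hp.eq ▸ hg.antitone hx
  have hge_g {x : ℝ} (hx : x ≤ p) : p ≤ g x := hp.eq ▸ hg.antitone hx
  have hge_symm {x : ℝ} (hx : x ≤ p) : p ≤ g.symm x := hp' ▸ hg.perm_symm.antitone hx
  refine ⟨τ, hτ, Equiv.ext fun x => ?_, Equiv.ext fun x => ?_⟩
  all_goals rcases le_total x p with hx | hx <;> simp only [Equiv.Perm.mul_apply]
  · rw [hτ_le x hx, hτ_ge _ (hge_symm hx), g.apply_symm_apply, Equiv.Perm.one_apply]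
  · rw [hτ_ge x hx, hτ_le _ (hle_g hx), g.symm_apply_apply, Equiv.Perm.one_apply]
  · rw [hτ_le x hx, hτ_ge _ (hge_g (hle_g (hge_symm hx))), g.apply_symm_apply]
  · rw [hτ_ge x hx, hτ_le _ (hle_g (hge_g (hle_g hx))), g.symm_apply_apply]

theorem stmt_8_general (f : Equiv.Perm ℝ) (hfm : StrictMono (⇑f)) :
    (∃ τ : Equiv.Perm ℝ, IsHomeo τ ∧ StrictAnti (⇑τ) ∧ τ * τ = 1 ∧ τ * f * τ = f) ↔
    (∃ g : Equiv.Perm ℝ, IsHomeo g ∧ StrictAnti (⇑g) ∧ g * g = f) := by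
  constructor
  · rintro ⟨τ, -, hτ, hτ2, hτf⟩
    obtain ⟨g, hg, hgf⟩ := exists_strictAnti_sq_eq_of_involution hfm hτ hτ2 hτf
    exact ⟨g, hg.isHomeo, hg, hgf⟩
  · rintro ⟨g, -, hg, rfl⟩
    obtain ⟨τ, hτ, hτ2, hτf⟩ := exists_strictAnti_involution_of_sq hg
    exact ⟨τ, hτ.isHomeo, hτ, hτ2, hτf⟩

/-- For a strictly increasing homeomorphism f of ℝ, there is a strictly decreasing
involution commuting with f iff f has a strictly decreasing square root. -/
theorem stmt_8 (f : Equiv.Perm ℝ) (hf : IsHomeo f) (hfm : StrictMono (⇑f)) :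
    (∃ τ : Equiv.Perm ℝ, IsHomeo τ ∧ StrictAnti (⇑τ) ∧ τ * τ = 1 ∧ τ * f * τ = f) ↔
    (∃ g : Equiv.Perm ℝ, IsHomeo g ∧ StrictAnti (⇑g) ∧ g * g = f) :=
  stmt_8_general f hfm
end

section
/- Let f and g be strictly increasing homeomorphisms of ℝ. (Forward direction) If h is a homeomorphism of ℝ with h ∘ f ∘ h⁻¹ = g, then Γ_f(x) = deg_h · Γ_g(h(x)) for all x ∈ ℝ. (Converse) If h is a homeomorphism of ℝ such that Γ_f(x) = deg_h · Γ_g(h(x)) for all x ∈ ℝ, then there exists a homeomorphism h' of ℝ of the same degree as h (i.e., h' is strictly increasing if h is, and strictly decreasing if h is) with h' ∘ f ∘ h'⁻¹ = g. -/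
/-- The signature Γ_f of a map `f : ℝ → ℝ`: `1`, `0` or `-1` according as `f x > x`,
`f x = x` or `f x < x`. -/
noncomputable def signature (f : ℝ → ℝ) (x : ℝ) : ℝ :=
  if x < f x then 1 else if f x = x then 0 else -1

open Classical in
/-- The degree of a homeomorphism of ℝ: 1 if strictly increasing, -1 otherwise. -/
noncomputable def deg (h : Equiv.Perm ℝ) : ℝ := if StrictMono (⇑h) then 1 else -1

/-!
For the forward direction, `g (h x) = h (f x)`, so `h` preserves or reverses the comparison
between `x` and `f x` according to its degree. For the converse, conjugating `g` by `x ↦ -x`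
reduces to an increasing `h`. Such an `h` maps the fixed points of `f` onto those of `g`, hence
each component of the set of points moved by `f` (an interval on which `f` moves every point in
the same direction) onto a component for `g`, with the same direction. On a component, the
orbit of a base point `b` under `f` or `f⁻¹`, whichever moves it upward, tiles the interval by
the fundamental domains `[fⁿ b, fⁿ⁺¹ b)`: the orbit is unbounded in the component, since the
supremum of a bounded orbit would be a fixed point. Mapping `[b, f b)` affinely onto
`[h b, g (h b))` and spreading this map along the orbits conjugates `f` to `g` on the component;
on the fixed points, `h` itself is kept.
-/

open Set Function

lemma signature_eq_zero_iff {f : ℝ → ℝ} {x : ℝ} : signature f x = 0 ↔ f x = x := by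
  unfold signature
  split_ifs <;> grind

lemma signature_eq_signature_iff {f g : ℝ → ℝ} {x y : ℝ} :
    signature f x = signature g y ↔ (x < f x ↔ y < g y) ∧ (f x < x ↔ g y < y) := by
  unfold signature
  split_ifs <;> grind

lemma signature_eq_neg_signature_iff {f g : ℝ → ℝ} {x y : ℝ} :
    signature f x = -signature g y ↔ (x < f x ↔ g y < y) ∧ (f x < x ↔ y < g y) := by
  unfold signature
  split_ifs <;> grind

lemma signature_neg_conj (g : ℝ → ℝ) (y : ℝ) :
    signature (fun x => -g (-x)) (-y) = -signature g y := by
  rw [signature_eq_neg_signature_iff]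
  simp

section Component

variable {α : Type*} [LinearOrder α] {x y : α}

lemma apply_ne_of_mem_ordConnectedComponent {p : α → α}
    (hy : y ∈ ordConnectedComponent (fixedPoints p)ᶜ x) : p y ≠ y :=
  ordConnectedComponent_subset hy

lemma lt_of_mem_ordConnectedComponent_of_le {s : Set α} {a t : α} (ht : t ∉ s) (hxt : x ≤ t)
    (ha : a ∈ ordConnectedComponent s x) : a < t :=
  lt_of_not_ge fun hta => ht (ha (mem_uIcc_of_le hxt hta))

lemma lt_of_mem_ordConnectedComponent_of_ge {s : Set α} {a t : α} (ht : t ∉ s) (htx : t ≤ x)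
    (ha : a ∈ ordConnectedComponent s x) : t < a :=
  lt_of_not_ge fun hat => ht (ha (mem_uIcc_of_ge hat htx))

lemma OrderIso.image_ordConnectedComponent {β : Type*} [LinearOrder β] (φ : α ≃o β)
    (s : Set α) (x : α) :
    φ '' ordConnectedComponent s x = ordConnectedComponent (φ '' s) (φ x) := by
  ext z
  obtain ⟨y, rfl⟩ := φ.surjective z
  simp only [φ.injective.mem_set_image, mem_ordConnectedComponent]
  rw [← image_subset_image_iff φ.injective, uIcc, uIcc, φ.image_Icc, φ.map_inf, φ.map_sup]

lemma OrderIso.fixedPoints_inv (e : α ≃o α) : fixedPoints ⇑e⁻¹ = fixedPoints e := by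
  ext t
  exact e.symm_apply_eq.trans eq_comm

lemma OrderIso.apply_mem_ordConnectedComponent_self (e : α ≃o α) (hx : e x ≠ x) :
    e x ∈ ordConnectedComponent (fixedPoints e)ᶜ x := by
  intro t ht (hfix : e t = t)
  rcases lt_or_gt_of_ne (show x ≠ t by rintro rfl; exact hx hfix) with hxt | htx
  · have := e.strictMono hxt
    rw [hfix] at this
    exact (max_lt hxt this).not_ge ht.2
  · have := e.strictMono htx
    rw [hfix] at this
    exact (lt_min htx this).not_ge ht.1

lemma OrderIso.Icc_subset_ordConnectedComponent (e : α ≃o α) (hx : e x ≠ x) :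
    Icc x (e x) ⊆ ordConnectedComponent (fixedPoints e)ᶜ x :=
  OrdConnected.out inferInstance (self_mem_ordConnectedComponent.2 hx)
    (e.apply_mem_ordConnectedComponent_self hx)

lemma OrderIso.apply_mem_ordConnectedComponent (e : α ≃o α)
    (hy : y ∈ ordConnectedComponent (fixedPoints e)ᶜ x) :
    e y ∈ ordConnectedComponent (fixedPoints e)ᶜ x :=
  mem_ordConnectedComponent_trans hy
    (e.apply_mem_ordConnectedComponent_self (apply_ne_of_mem_ordConnectedComponent hy))

lemma OrderIso.zpow_apply_mem_ordConnectedComponent (e : α ≃o α) (n : ℤ)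
    (hy : y ∈ ordConnectedComponent (fixedPoints e)ᶜ x) :
    (e ^ n) y ∈ ordConnectedComponent (fixedPoints e)ᶜ x := by
  induction n using Int.induction_on generalizing y with
  | zero => simpa
  | succ n ih => rw [zpow_add_one]; exact ih (e.apply_mem_ordConnectedComponent hy)
  | pred n ih =>
    rw [zpow_sub_one]
    refine ih ?_
    rw [← e.fixedPoints_inv] at hy ⊢
    exact e⁻¹.apply_mem_ordConnectedComponent hy

lemma OrderIso.zpow_neg_add_apply_zpow_apply (e : α ≃o α) (n m : ℤ) (y : α) :
    (e ^ (-(n + m))) ((e ^ m) y) = (e ^ (-n)) y := by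
  rw [← RelIso.mul_apply, ← zpow_add, neg_add, neg_add_cancel_right]

lemma OrderIso.strictMono_zpow_apply (e : α ≃o α) (hx : x < e x) :
    StrictMono fun n : ℤ => (e ^ n) x :=
  strictMono_int_of_lt_succ fun n => by
    simpa [zpow_add_one, RelIso.mul_apply] using (e ^ n).strictMono hx

lemma OrderIso.zpow_neg_apply_mem_Ico_iff (e : α ≃o α) (n : ℤ) :
    (e ^ (-n)) y ∈ Ico x (e x) ↔ (e ^ n) x ≤ y ∧ y < (e ^ (n + 1)) x := by
  rw [zpow_neg, zpow_add_one, RelIso.mul_apply, mem_Ico]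
  exact and_congr (e ^ n).le_symm_apply (e ^ n).symm_apply_lt

end Component

section Orbit

variable {α : Type*} [ConditionallyCompleteLinearOrder α] {e : α ≃o α} {x y : α}

lemma OrderIso.exists_lt_pow_apply (e : α ≃o α) (hx : x < e x)
    (hy : y ∈ ordConnectedComponent (fixedPoints e)ᶜ x) : ∃ n : ℕ, y < (e ^ n) x := by
  by_contra! hle
  have hbdd : BddAbove (range fun n : ℕ => (e ^ n) x) :=
    ⟨y, by rintro _ ⟨n, rfl⟩; exact hle n⟩
  set L := ⨆ n : ℕ, (e ^ n) x
  have hxL : x ≤ L := by simpa using le_ciSup hbdd 0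
  have hfix : e L = L := by
    refine le_antisymm ?_ (ciSup_le fun n => ?_)
    · rw [e.map_ciSup hbdd]
      exact ciSup_le fun n => by simpa [pow_succ'] using le_ciSup hbdd (n + 1)
    · cases n with
      | zero => simpa using hx.le.trans (e.monotone hxL)
      | succ n => simpa [pow_succ'] using e.monotone (le_ciSup hbdd n)
  exact hy (mem_uIcc_of_le hxL (ciSup_le hle)) hfix

/-- The index `n` of the fundamental domain `[eⁿ x, eⁿ⁺¹ x)` containing `y` (arbitrary if there
is none). -/
noncomputable def orbitFloor (e : α ≃o α) (x y : α) : ℤ :=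
  Classical.epsilon fun n : ℤ => (e ^ (-n)) y ∈ Ico x (e x)

lemma orbitFloor_eq {n : ℤ} (hx : x < e x) (hn : (e ^ (-n)) y ∈ Ico x (e x)) :
    orbitFloor e x y = n := by
  have hm := (e.zpow_neg_apply_mem_Ico_iff (orbitFloor e x y)).1
    (Classical.epsilon_spec (p := fun n : ℤ => (e ^ (-n)) y ∈ Ico x (e x)) ⟨n, hn⟩)
  rw [e.zpow_neg_apply_mem_Ico_iff] at hn
  have horb := e.strictMono_zpow_apply hx
  have h₁ := horb.lt_iff_lt.1 (hm.1.trans_lt hn.2)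
  have h₂ := horb.lt_iff_lt.1 (hn.1.trans_lt hm.2)
  exact le_antisymm (Int.lt_add_one_iff.1 h₁) (Int.lt_add_one_iff.1 h₂)

variable [TopologicalSpace α] [OrderTopology α] [DenselyOrdered α]

lemma OrderIso.lt_apply_of_mem_ordConnectedComponent (e : α ≃o α) (hx : x < e x)
    (hy : y ∈ ordConnectedComponent (fixedPoints e)ᶜ x) : y < e y := by
  by_contra! hyx
  obtain ⟨z, hz, hfix⟩ := OrdConnected.isPreconnected inferInstance |>.intermediate_value₂
    (self_mem_ordConnectedComponent.2 hx.ne') hy continuousOn_id e.continuous.continuousOn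
    hx.le hyx
  exact apply_ne_of_mem_ordConnectedComponent hz hfix.symm

lemma OrderIso.exists_zpow_neg_apply_mem_Ico (e : α ≃o α) (hx : x < e x)
    (hy : y ∈ ordConnectedComponent (fixedPoints e)ᶜ x) :
    ∃ n : ℤ, (e ^ (-n)) y ∈ Ico x (e x) := by
  obtain ⟨N, hN⟩ := e.exists_lt_pow_apply hx hy
  obtain ⟨M, hM⟩ := e.exists_lt_pow_apply (e.lt_apply_of_mem_ordConnectedComponent hx hy)
    (mem_ordConnectedComponent_comm.1 hy)
  have horb := e.strictMono_zpow_apply hx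
  obtain ⟨n, hn, hmax⟩ := Int.exists_greatest_of_bdd (P := fun n : ℤ => (e ^ n) x ≤ y)
    ⟨N, fun z hz => horb.le_iff_le.1 ((zpow_natCast e N).symm ▸ hz.trans hN.le)⟩
    ⟨-M, by rw [zpow_neg, zpow_natCast]; exact (e ^ M).symm_apply_le.2 hM.le⟩
  exact ⟨n, (e.zpow_neg_apply_mem_Ico_iff n).2
    ⟨hn, lt_of_not_ge fun h => (hmax _ h).not_gt (lt_add_one n)⟩⟩

lemma orbitFloor_spec (hx : x < e x) (hy : y ∈ ordConnectedComponent (fixedPoints e)ᶜ x) :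
    (e ^ (-orbitFloor e x y)) y ∈ Ico x (e x) :=
  Classical.epsilon_spec (e.exists_zpow_neg_apply_mem_Ico hx hy)

lemma orbitFloor_zpow_apply (hx : x < e x) (hy : y ∈ ordConnectedComponent (fixedPoints e)ᶜ x)
    (m : ℤ) : orbitFloor e x ((e ^ m) y) = orbitFloor e x y + m := by
  apply orbitFloor_eq hx
  rw [e.zpow_neg_add_apply_zpow_apply]
  exact orbitFloor_spec hx hy

lemma orbitFloor_monotoneOn (hx : x < e x) :
    MonotoneOn (orbitFloor e x) (ordConnectedComponent (fixedPoints e)ᶜ x) := by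
  intro y hy z hz hyz
  have hy' := (e.zpow_neg_apply_mem_Ico_iff _).1 (orbitFloor_spec hx hy)
  have hz' := (e.zpow_neg_apply_mem_Ico_iff _).1 (orbitFloor_spec hx hz)
  exact Int.lt_add_one_iff.1 <| (e.strictMono_zpow_apply hx).lt_iff_lt.1 <|
    hy'.1.trans_lt (hyz.trans_lt hz'.2)

end Orbit

section OrbitConj

noncomputable def lineThrough (a b c d t : ℝ) : ℝ := c + (d - c) / (b - a) * (t - a)

lemma lineThrough_strictMono {a b c d : ℝ} (hab : a < b) (hcd : c < d) :
    StrictMono (lineThrough a b c d) := fun s t hst => by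
  have : 0 < (d - c) / (b - a) := div_pos (sub_pos.2 hcd) (sub_pos.2 hab)
  unfold lineThrough
  gcongr

lemma lineThrough_lineThrough {a b c d : ℝ} (hab : a ≠ b) (hcd : c ≠ d) (t : ℝ) :
    lineThrough c d a b (lineThrough a b c d t) = t := by
  unfold lineThrough
  field_simp [sub_ne_zero.2 hab.symm, sub_ne_zero.2 hcd.symm]
  ring

lemma lineThrough_mapsTo_Ico {a b c d : ℝ} (hab : a < b) (hcd : c < d) :
    MapsTo (lineThrough a b c d) (Ico a b) (Ico c d) := fun t ht => by
  have hmono := lineThrough_strictMono hab hcd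
  have hb : lineThrough a b c d b = d := by
    unfold lineThrough
    field_simp [sub_ne_zero.2 hab.ne']
    ring
  exact ⟨by simpa [lineThrough] using hmono.monotone ht.1, by simpa only [hb] using hmono ht.2⟩

noncomputable def orbitConj (e k : ℝ ≃o ℝ) (x y z : ℝ) : ℝ :=
  (k ^ orbitFloor e x z) (lineThrough x (e x) y (k y) ((e ^ (-orbitFloor e x z)) z))

variable {e k : ℝ ≃o ℝ} {x y z : ℝ}

lemma zpow_neg_orbitFloor_apply_orbitConj (hx : x < e x) (hy : y < k y)
    (hz : z ∈ ordConnectedComponent (fixedPoints e)ᶜ x) :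
    (k ^ (-orbitFloor e x z)) (orbitConj e k x y z) ∈ Ico y (k y) := by
  rw [orbitConj, zpow_neg, RelIso.inv_apply_self]
  exact lineThrough_mapsTo_Ico hx hy (orbitFloor_spec hx hz)

lemma orbitFloor_orbitConj (hx : x < e x) (hy : y < k y)
    (hz : z ∈ ordConnectedComponent (fixedPoints e)ᶜ x) :
    orbitFloor k y (orbitConj e k x y z) = orbitFloor e x z :=
  orbitFloor_eq hy (zpow_neg_orbitFloor_apply_orbitConj hx hy hz)

lemma orbitConj_mapsTo (hx : x < e x) (hy : y < k y) :
    MapsTo (orbitConj e k x y) (ordConnectedComponent (fixedPoints e)ᶜ x)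
      (ordConnectedComponent (fixedPoints k)ᶜ y) := fun z hz => by
  have := k.zpow_apply_mem_ordConnectedComponent (orbitFloor e x z)
    (k.Icc_subset_ordConnectedComponent hy.ne'
      (Ico_subset_Icc_self (zpow_neg_orbitFloor_apply_orbitConj hx hy hz)))
  rwa [zpow_neg, RelIso.apply_inv_self] at this

lemma orbitConj_zpow_apply (hx : x < e x) (hz : z ∈ ordConnectedComponent (fixedPoints e)ᶜ x)
    (m : ℤ) : orbitConj e k x y ((e ^ m) z) = (k ^ m) (orbitConj e k x y z) := by
  rw [orbitConj, orbitConj, orbitFloor_zpow_apply hx hz, e.zpow_neg_add_apply_zpow_apply,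
    add_comm, zpow_add, RelIso.mul_apply]

lemma orbitConj_orbitConj (hx : x < e x) (hy : y < k y)
    (hz : z ∈ ordConnectedComponent (fixedPoints e)ᶜ x) :
    orbitConj k e y x (orbitConj e k x y z) = z := by
  rw [orbitConj, orbitFloor_orbitConj hx hy hz, orbitConj, zpow_neg, RelIso.inv_apply_self,
    lineThrough_lineThrough hx.ne hy.ne, zpow_neg, RelIso.apply_inv_self]

lemma orbitConj_strictMonoOn (hx : x < e x) (hy : y < k y) :
    StrictMonoOn (orbitConj e k x y) (ordConnectedComponent (fixedPoints e)ᶜ x) := by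
  intro z hz w hw hzw
  rcases (orbitFloor_monotoneOn hx hz hw hzw.le).lt_or_eq with hlt | heq
  · by_contra! hle
    have := orbitFloor_monotoneOn hy (orbitConj_mapsTo hx hy hw) (orbitConj_mapsTo hx hy hz) hle
    rw [orbitFloor_orbitConj hx hy hz, orbitFloor_orbitConj hx hy hw] at this
    exact this.not_gt hlt
  · rw [orbitConj, orbitConj, heq]
    exact (k ^ _).strictMono (lineThrough_strictMono hx hy ((e ^ _).strictMono hzw))

lemma orbitConj_surjOn (hx : x < e x) (hy : y < k y) :
    SurjOn (orbitConj e k x y) (ordConnectedComponent (fixedPoints e)ᶜ x)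
      (ordConnectedComponent (fixedPoints k)ᶜ y) := fun w hw =>
  ⟨orbitConj k e y x w, orbitConj_mapsTo hy hx hw, orbitConj_orbitConj hy hx hw⟩

end OrbitConj

section Orient

variable {α : Type*} [LinearOrder α] {f g : α ≃o α} {x y : α}

def orient (f : α ≃o α) (x : α) : α ≃o α := if x < f x then f else f⁻¹

lemma lt_orient_apply (hx : f x ≠ x) : x < orient f x x := by
  unfold orient
  split_ifs with h
  · exact h
  · exact f.lt_symm_apply.2 (lt_of_le_of_ne (not_lt.1 h) hx)

lemma fixedPoints_orient (f : α ≃o α) (x : α) : fixedPoints (orient f x) = fixedPoints f := by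
  unfold orient
  split_ifs
  · rfl
  · exact f.fixedPoints_inv

lemma exists_zpow_orient_eq (h : x < f x ↔ y < g y) :
    ∃ m : ℤ, orient f x ^ m = f ∧ orient g y ^ m = g := by
  by_cases hx : x < f x
  · exact ⟨1, by simp [orient, hx, h.1 hx]⟩
  · exact ⟨-1, by simp [orient, hx, mt h.2 hx]⟩

end Orient

section Conjugator

variable {f g φ : ℝ ≃o ℝ}

noncomputable def componentConj (f g φ : ℝ ≃o ℝ) (b : ℝ) : ℝ → ℝ :=
  orbitConj (orient f b) (orient g (φ b)) b (φ b)

-- `ordConnectedProj` picks one base point per component, so a whole component shares one map.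
noncomputable def conjugator (f g φ : ℝ ≃o ℝ) (x : ℝ) : ℝ :=
  if hx : x ∈ (fixedPoints f)ᶜ then componentConj f g φ (ordConnectedProj _ ⟨x, hx⟩) x
  else φ x

lemma conjugator_of_isFixedPt {x : ℝ} (hx : f x = x) : conjugator f g φ x = φ x :=
  dif_neg (not_not.2 hx)

lemma conjugator_eqOn {x : ℝ} (hx : x ∈ (fixedPoints f)ᶜ) :
    EqOn (conjugator f g φ) (componentConj f g φ (ordConnectedProj _ ⟨x, hx⟩))
      (ordConnectedComponent (fixedPoints f)ᶜ x) := fun z hz => by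
  rw [conjugator, dif_pos (ordConnectedComponent_subset hz),
    (ordConnectedProj_eq (x := ⟨z, _⟩) (y := ⟨x, hx⟩)).2
      (mem_ordConnectedComponent_comm.1 hz)]

section Signature

variable (hsig : ∀ x, signature f x = signature g (φ x))
include hsig

lemma image_ordConnectedComponent_of_signature_eq (x : ℝ) :
    φ '' ordConnectedComponent (fixedPoints f)ᶜ x =
      ordConnectedComponent (fixedPoints g)ᶜ (φ x) := by
  have hfix : φ '' (fixedPoints f)ᶜ = (fixedPoints g)ᶜ := by
    ext z
    obtain ⟨y, rfl⟩ := φ.surjective z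
    simp only [φ.injective.mem_set_image, mem_compl_iff, mem_fixedPoints, IsFixedPt,
      ← signature_eq_zero_iff, hsig]
  rw [φ.image_ordConnectedComponent, hfix]

section Base

variable {x b : ℝ} (hb : b ∈ ordConnectedComponent (fixedPoints f)ᶜ x)
include hb

lemma lt_orient_apply_of_signature_eq : b < orient f b b ∧ φ b < orient g (φ b) (φ b) := by
  have hfb := apply_ne_of_mem_ordConnectedComponent hb
  refine ⟨lt_orient_apply hfb, lt_orient_apply fun h => hfb ?_⟩
  rwa [← signature_eq_zero_iff, hsig, signature_eq_zero_iff]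

lemma componentConj_mapsTo :
    MapsTo (componentConj f g φ b) (ordConnectedComponent (fixedPoints f)ᶜ x)
      (φ '' ordConnectedComponent (fixedPoints f)ᶜ x) := by
  obtain ⟨h₁, h₂⟩ := lt_orient_apply_of_signature_eq hsig hb
  have := orbitConj_mapsTo h₁ h₂
  rwa [fixedPoints_orient, fixedPoints_orient, ← image_ordConnectedComponent_of_signature_eq hsig,
    ← ordConnectedComponent_eq hb] at this

lemma componentConj_strictMonoOn :
    StrictMonoOn (componentConj f g φ b) (ordConnectedComponent (fixedPoints f)ᶜ x) := by
  obtain ⟨h₁, h₂⟩ := lt_orient_apply_of_signature_eq hsig hb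
  have := orbitConj_strictMonoOn h₁ h₂
  rwa [fixedPoints_orient, ← ordConnectedComponent_eq hb] at this

lemma componentConj_surjOn :
    SurjOn (componentConj f g φ b) (ordConnectedComponent (fixedPoints f)ᶜ x)
      (φ '' ordConnectedComponent (fixedPoints f)ᶜ x) := by
  obtain ⟨h₁, h₂⟩ := lt_orient_apply_of_signature_eq hsig hb
  have := orbitConj_surjOn h₁ h₂
  rwa [fixedPoints_orient, fixedPoints_orient, ← image_ordConnectedComponent_of_signature_eq hsig,
    ← ordConnectedComponent_eq hb] at this

lemma componentConj_apply_apply {z : ℝ} (hz : z ∈ ordConnectedComponent (fixedPoints f)ᶜ x) :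
    componentConj f g φ b (f z) = g (componentConj f g φ b z) := by
  obtain ⟨m, hf, hg⟩ := exists_zpow_orient_eq ((signature_eq_signature_iff.1 (hsig b)).1)
  rw [ordConnectedComponent_eq hb, ← fixedPoints_orient f b] at hz
  have := orbitConj_zpow_apply (k := orient g (φ b)) (y := φ b)
    (lt_orient_apply_of_signature_eq hsig hb).1 hz m
  rwa [hf, hg] at this

end Base

lemma conjugator_mem_image {x : ℝ} (hx : f x ≠ x) :
    conjugator f g φ x ∈ φ '' ordConnectedComponent (fixedPoints f)ᶜ x := by
  have hxx := self_mem_ordConnectedComponent.2 (show x ∈ (fixedPoints f)ᶜ from hx)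
  rw [conjugator_eqOn hx hxx]
  exact componentConj_mapsTo hsig (ordConnectedProj_mem_ordConnectedComponent _ ⟨x, hx⟩) hxx

lemma conjugator_lt_of_lt_isFixedPt {x t : ℝ} (ht : f t = t) (hxt : x < t) :
    conjugator f g φ x < φ t := by
  by_cases hx : f x = x
  · rw [conjugator_of_isFixedPt hx]
    exact φ.strictMono hxt
  · obtain ⟨a, ha, hax⟩ := conjugator_mem_image hsig hx
    rw [← hax]
    exact φ.strictMono (lt_of_mem_ordConnectedComponent_of_le (not_not.2 ht) hxt.le ha)

lemma lt_conjugator_of_isFixedPt_lt {x t : ℝ} (ht : f t = t) (htx : t < x) :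
    φ t < conjugator f g φ x := by
  by_cases hx : f x = x
  · rw [conjugator_of_isFixedPt hx]
    exact φ.strictMono htx
  · obtain ⟨a, ha, hax⟩ := conjugator_mem_image hsig hx
    rw [← hax]
    exact φ.strictMono (lt_of_mem_ordConnectedComponent_of_ge (not_not.2 ht) htx.le ha)

lemma conjugator_strictMono : StrictMono (conjugator f g φ) := by
  intro x y hxy
  by_cases hy : y ∈ ordConnectedComponent (fixedPoints f)ᶜ x
  · have hx := nonempty_ordConnectedComponent.1 ⟨y, hy⟩
    have hxx := self_mem_ordConnectedComponent.2 hx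
    rw [conjugator_eqOn hx hxx, conjugator_eqOn hx hy]
    exact componentConj_strictMonoOn hsig (ordConnectedProj_mem_ordConnectedComponent _ ⟨x, hx⟩)
      hxx hy hxy
  · -- a fixed point `t` separates `x` from `y`, and `conjugator` is `φ` there
    obtain ⟨t, ht, hft⟩ := not_subset.1 hy
    rw [uIcc_of_le hxy.le] at ht
    replace hft : f t = t := not_not.1 hft
    rcases ht.1.lt_or_eq with hxt | rfl <;> rcases ht.2.lt_or_eq with hty | rfl
    · exact (conjugator_lt_of_lt_isFixedPt hsig hft hxt).trans
        (lt_conjugator_of_isFixedPt_lt hsig hft hty)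
    · exact (conjugator_of_isFixedPt hft).symm ▸ conjugator_lt_of_lt_isFixedPt hsig hft hxt
    · exact (conjugator_of_isFixedPt hft).symm ▸ lt_conjugator_of_isFixedPt_lt hsig hft hty
    · exact absurd hxy (lt_irrefl _)

lemma conjugator_surjective : Surjective (conjugator f g φ) := by
  intro y
  obtain ⟨x, rfl⟩ := φ.surjective y
  by_cases hx : f x = x
  · exact ⟨x, conjugator_of_isFixedPt hx⟩
  · have hxx := self_mem_ordConnectedComponent.2 (show x ∈ (fixedPoints f)ᶜ from hx)
    obtain ⟨z, hz, hzx⟩ := componentConj_surjOn hsig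
      (ordConnectedProj_mem_ordConnectedComponent _ ⟨x, hx⟩) (mem_image_of_mem φ hxx)
    exact ⟨z, (conjugator_eqOn hx hz).trans hzx⟩

lemma conjugator_apply_apply (x : ℝ) : conjugator f g φ (f x) = g (conjugator f g φ x) := by
  by_cases hx : f x = x
  · rw [hx, conjugator_of_isFixedPt hx]
    rw [← signature_eq_zero_iff, hsig, signature_eq_zero_iff] at hx
    exact hx.symm
  · have hxx := self_mem_ordConnectedComponent.2 (show x ∈ (fixedPoints f)ᶜ from hx)
    rw [conjugator_eqOn hx (f.apply_mem_ordConnectedComponent_self hx), conjugator_eqOn hx hxx]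
    exact componentConj_apply_apply hsig
      (ordConnectedProj_mem_ordConnectedComponent _ ⟨x, hx⟩) hxx

theorem exists_orderIso_conj_of_signature_eq :
    ∃ ψ : ℝ ≃o ℝ, ∀ x, ψ (f x) = g (ψ x) :=
  ⟨StrictMono.orderIsoOfSurjective _ (conjugator_strictMono hsig) (conjugator_surjective hsig),
    conjugator_apply_apply hsig⟩

end Signature

end Conjugator

lemma StrictMono.not_strictAnti {α β : Type*} [LinearOrder α] [Nontrivial α] [Preorder β]
    {h : α → β} (hm : StrictMono h) : ¬StrictAnti h := fun ha => by
  obtain ⟨a, b, hab⟩ := exists_pair_lt α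
  exact lt_asymm (hm hab) (ha hab)

lemma deg_of_strictMono {h : Equiv.Perm ℝ} (hm : StrictMono h) : deg h = 1 := if_pos hm

lemma deg_of_strictAnti {h : Equiv.Perm ℝ} (ha : StrictAnti h) : deg h = -1 :=
  if_neg fun hm => hm.not_strictAnti ha

section Perm

open Equiv

variable {f g h : Perm ℝ}

lemma signature_eq_of_strictMono_of_conj (hm : StrictMono h) (hconj : h * f * h⁻¹ = g)
    (x : ℝ) : signature f x = signature g (h x) := by
  rw [← hconj, signature_eq_signature_iff]
  simp [hm.lt_iff_lt]

lemma signature_eq_neg_of_strictAnti_of_conj (ha : StrictAnti h) (hconj : h * f * h⁻¹ = g)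
    (x : ℝ) : signature f x = -signature g (h x) := by
  rw [← hconj, signature_eq_neg_signature_iff]
  simp [ha.lt_iff_gt]

lemma exists_strictMono_conj_of_signature_eq (hfm : StrictMono f) (hgm : StrictMono g)
    (hm : StrictMono h) (hsig : ∀ x, signature f x = signature g (h x)) :
    ∃ h' : Perm ℝ, IsHomeo h' ∧ StrictMono h' ∧ h' * f * h'⁻¹ = g := by
  obtain ⟨ψ, hψ⟩ := exists_orderIso_conj_of_signature_eq
    (f := hfm.orderIsoOfSurjective f f.surjective) (g := hgm.orderIsoOfSurjective g g.surjective)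
    (φ := hm.orderIsoOfSurjective h h.surjective) hsig
  refine ⟨ψ.toEquiv, ⟨ψ.continuous, ψ.symm.continuous⟩, ψ.strictMono, ?_⟩
  ext x
  simpa using hψ (ψ.symm x)

lemma exists_strictAnti_conj_of_signature_eq_neg (hfm : StrictMono f) (hgm : StrictMono g)
    (ha : StrictAnti h) (hsig : ∀ x, signature f x = -signature g (h x)) :
    ∃ h' : Perm ℝ, IsHomeo h' ∧ StrictAnti h' ∧ h' * f * h'⁻¹ = g := by
  obtain ⟨h', hh', hm', hconj⟩ := exists_strictMono_conj_of_signature_eq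
    (g := Equiv.neg ℝ * g * Equiv.neg ℝ) (h := Equiv.neg ℝ * h) hfm
    (fun a b hab => by simpa using hgm (neg_lt_neg hab)) (fun a b hab => by simpa using ha hab)
    fun x => (hsig x).trans (signature_neg_conj g (h x)).symm
  refine ⟨Equiv.neg ℝ * h', ⟨hh'.1.neg, hh'.2.comp continuous_neg⟩,
    fun a b hab => by simpa using hm' hab, ?_⟩
  ext x
  simpa using congrArg Neg.neg (DFunLike.congr_fun hconj (-x))

end Perm

theorem stmt_11_general (f g : Equiv.Perm ℝ)
    (hfm : StrictMono (⇑f)) (hgm : StrictMono (⇑g)) (h : Equiv.Perm ℝ) (hh : IsHomeo h) :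
    (h * f * h⁻¹ = g → ∀ x : ℝ, signature (⇑f) x = deg h * signature (⇑g) (h x)) ∧
    ((∀ x : ℝ, signature (⇑f) x = deg h * signature (⇑g) (h x)) →
      ∃ h' : Equiv.Perm ℝ, IsHomeo h' ∧
        (StrictMono (⇑h) → StrictMono (⇑h')) ∧ (StrictAnti (⇑h) → StrictAnti (⇑h')) ∧
        h' * f * h'⁻¹ = g) := by
  rcases hh.1.strictMono_of_inj h.injective with hm | ha
  · simp only [deg_of_strictMono hm, one_mul]
    refine ⟨signature_eq_of_strictMono_of_conj hm, fun hsig => ?_⟩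
    obtain ⟨h', hh', hm', hconj⟩ := exists_strictMono_conj_of_signature_eq hfm hgm hm hsig
    exact ⟨h', hh', fun _ => hm', fun ha => absurd ha hm.not_strictAnti, hconj⟩
  · simp only [deg_of_strictAnti ha, neg_one_mul]
    refine ⟨signature_eq_neg_of_strictAnti_of_conj ha, fun hsig => ?_⟩
    obtain ⟨h', hh', ha', hconj⟩ := exists_strictAnti_conj_of_signature_eq_neg hfm hgm ha hsig
    exact ⟨h', hh', fun hm => absurd ha hm.not_strictAnti, fun _ => ha', hconj⟩

/-- Conjugacy of strictly increasing homeomorphisms of ℝ is governed by signatures: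
if h f h⁻¹ = g then Γ_f = deg h · Γ_g ∘ h; conversely if Γ_f = deg h · Γ_g ∘ h for
some homeomorphism h, then f and g are conjugate by a homeomorphism of the same
degree as h. -/
theorem stmt_11 (f g : Equiv.Perm ℝ) (hf : IsHomeo f) (hg : IsHomeo g)
    (hfm : StrictMono (⇑f)) (hgm : StrictMono (⇑g)) (h : Equiv.Perm ℝ) (hh : IsHomeo h) :
    (h * f * h⁻¹ = g → ∀ x : ℝ, signature (⇑f) x = deg h * signature (⇑g) (h x)) ∧
    ((∀ x : ℝ, signature (⇑f) x = deg h * signature (⇑g) (h x)) →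
      ∃ h' : Equiv.Perm ℝ, IsHomeo h' ∧
        (StrictMono (⇑h) → StrictMono (⇑h')) ∧ (StrictAnti (⇑h) → StrictAnti (⇑h')) ∧
        h' * f * h'⁻¹ = g) :=
  stmt_11_general f g hfm hgm h hh
end

section
/- Let f and g be strictly decreasing homeomorphisms of ℝ, and let p and q be real numbers with f(p) = p and g(q) = q. Then f and g are conjugate in the group of homeomorphisms of ℝ (i.e., there is a homeomorphism k of ℝ with k ∘ f ∘ k⁻¹ = g) if and only if there is a homeomorphism h of ℝ with h(p) = q and h ∘ f ∘ f ∘ h⁻¹ = g ∘ g. -/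
/-!
A conjugacy from `f` to `g` conjugates `f²` to `g²` and carries the fixed point of `f` to a fixed
point of `g`, which is `q` because a decreasing map has at most one fixed point.

Conversely, let `h` conjugate `f²` to `g²` with `h p = q`. A continuous injection is monotone, and
if `h` is decreasing then `h ∘ f` is an increasing map with the same properties, so we may assume
`h` increasing. Since `f` swaps the half-lines `(-∞, p]` and `[p, ∞)`, the map equal to
`g⁻¹ ∘ h ∘ f` on `(-∞, p]` and to `h` on `[p, ∞)` satisfies `k ∘ f = g ∘ k` on each half-line:
on one side this is the definition, on the other it is `h ∘ f² = g² ∘ h`. This `k` is an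
increasing bijection, hence an order isomorphism, hence a homeomorphism.
-/

open Function

theorem Equiv.Perm.mul_mul_inv_eq_iff_semiconj {α : Type*} (k f g : Equiv.Perm α) :
    k * f * k⁻¹ = g ↔ Semiconj k f g := by
  rw [mul_inv_eq_iff_eq_mul, Equiv.Perm.ext_iff]
  exact Iff.rfl

theorem StrictAnti.eq_of_isFixedPt {α : Type*} [LinearOrder α] {f : α → α} (hf : StrictAnti f)
    {a b : α} (ha : IsFixedPt f a) (hb : IsFixedPt f b) : a = b := by
  rcases le_total a b with hab | hba
  · exact le_antisymm hab (by simpa only [ha.eq, hb.eq] using hf.antitone hab)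
  · exact le_antisymm (by simpa only [ha.eq, hb.eq] using hf.antitone hba) hba

theorem StrictAnti.equiv_symm {α β : Type*} [LinearOrder α] [LinearOrder β] {g : α ≃ β}
    (hg : StrictAnti g) : StrictAnti g.symm := fun a b hab => by
  rwa [← hg.lt_iff_gt, g.apply_symm_apply, g.apply_symm_apply]

theorem OrderIso.isHomeo (k : ℝ ≃o ℝ) : IsHomeo k.toEquiv :=
  ⟨k.continuous, k.symm.continuous⟩

section Glue

variable {α β : Type*} [LinearOrder α]

def glueConj (f : α ≃ α) (g : β ≃ β) (h : α ≃ β) (p : α) (x : α) : β :=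
  if x ≤ p then g.symm (h (f x)) else h x

variable {f : α ≃ α} {g : β ≃ β} {h : α ≃ β} {p : α} {q : β}

theorem glueConj_of_le {x : α} (hx : x ≤ p) : glueConj f g h p x = g.symm (h (f x)) :=
  if_pos hx

theorem glueConj_of_ge (hp : f p = p) (hq : g q = q) (hpq : h p = q) {x : α} (hx : p ≤ x) :
    glueConj f g h p x = h x := by
  rcases hx.eq_or_lt with rfl | hx
  · rw [glueConj_of_le le_rfl, hp, hpq, g.symm_apply_eq, hq]
  · exact if_neg hx.not_ge

theorem semiconj_glueConj (hfa : StrictAnti f) (hp : f p = p) (hq : g q = q) (hpq : h p = q)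
    (hsq : Semiconj h (f ∘ f) (g ∘ g)) : Semiconj (glueConj f g h p) f g := by
  intro x
  rcases le_total x p with hx | hx
  · have hfx : p ≤ f x := hp ▸ hfa.antitone hx
    rw [glueConj_of_ge hp hq hpq hfx, glueConj_of_le hx, g.apply_symm_apply]
  · have hfx : f x ≤ p := hp ▸ hfa.antitone hx
    rw [glueConj_of_le hfx, glueConj_of_ge hp hq hpq hx]
    exact g.symm_apply_eq.mpr (hsq x)

variable [LinearOrder β]

theorem strictMono_glueConj (hfa : StrictAnti f) (hga : StrictAnti g) (hp : f p = p)
    (hq : g q = q) (hh : StrictMono h) (hpq : h p = q) : StrictMono (glueConj f g h p) :=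
  StrictMonoOn.Iic_union_Ici
    ((hga.equiv_symm.comp (hh.comp_strictAnti hfa)).strictMonoOn _ |>.congr
      fun _ hx => (glueConj_of_le hx).symm)
    ((hh.strictMonoOn _).congr fun _ hx => (glueConj_of_ge hp hq hpq hx).symm)

theorem surjective_glueConj (hfa : StrictAnti f) (hga : StrictAnti g) (hp : f p = p)
    (hq : g q = q) (hh : StrictMono h) (hpq : h p = q) : Surjective (glueConj f g h p) := by
  intro z
  rcases le_or_gt z q with hz | hz
  · have hgz : h p ≤ g z := hpq ▸ hq ▸ hga.antitone hz
    refine ⟨f.symm (h.symm (g z)), ?_⟩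
    rw [glueConj_of_le, f.apply_symm_apply, h.apply_symm_apply, g.symm_apply_apply]
    rwa [← hfa.le_iff_ge, f.apply_symm_apply, hp, ← hh.le_iff_le, h.apply_symm_apply]
  · refine ⟨h.symm z, ?_⟩
    rw [glueConj_of_ge hp hq hpq, h.apply_symm_apply]
    rw [← hh.le_iff_le, h.apply_symm_apply, hpq]
    exact hz.le

theorem exists_orderIso_semiconj_of_semiconj_sq (hfa : StrictAnti f) (hga : StrictAnti g)
    (hp : f p = p) (hq : g q = q) (hh : StrictMono h) (hpq : h p = q)
    (hsq : Semiconj h (f ∘ f) (g ∘ g)) : ∃ k : α ≃o β, Semiconj k f g :=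
  ⟨StrictMono.orderIsoOfSurjective _ (strictMono_glueConj hfa hga hp hq hh hpq)
    (surjective_glueConj hfa hga hp hq hh hpq), semiconj_glueConj hfa hp hq hpq hsq⟩

end Glue

theorem exists_strictMono_semiconj_sq {α β : Type*} [ConditionallyCompleteLinearOrder α]
    [TopologicalSpace α] [OrderTopology α] [DenselyOrdered α] [LinearOrder β]
    [TopologicalSpace β] [OrderClosedTopology β] {f : α ≃ α} {g : β → β} {h : α ≃ β} {p : α}
    {q : β} (hfa : StrictAnti f) (hp : f p = p) (hh : Continuous h) (hpq : h p = q)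
    (hsq : Semiconj h (f ∘ f) (g ∘ g)) :
    ∃ h' : α ≃ β, StrictMono h' ∧ h' p = q ∧ Semiconj h' (f ∘ f) (g ∘ g) := by
  rcases hh.strictMono_of_inj h.injective with hmono | hanti
  · exact ⟨h, hmono, hpq, hsq⟩
  · refine ⟨f.trans h, hanti.comp hfa, by simp [hp, hpq], ?_⟩
    rw [Equiv.coe_trans]
    exact hsq.comp_left ((Function.Commute.refl f).comp_right (.refl f))

theorem stmt_12_general (f g : Equiv.Perm ℝ)
    (hfa : StrictAnti (⇑f)) (hga : StrictAnti (⇑g))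
    (p q : ℝ) (hp : f p = p) (hq : g q = q) :
    (∃ k : Equiv.Perm ℝ, IsHomeo k ∧ k * f * k⁻¹ = g) ↔
    (∃ h : Equiv.Perm ℝ, IsHomeo h ∧ h p = q ∧ h * (f * f) * h⁻¹ = g * g) := by
  simp only [Equiv.Perm.mul_mul_inv_eq_iff_semiconj, Equiv.Perm.coe_mul]
  constructor
  · rintro ⟨k, hk, hkfg⟩
    exact ⟨k, hk, hga.eq_of_isFixedPt (IsFixedPt.map hp hkfg) hq, hkfg.comp_right hkfg⟩
  · rintro ⟨h, hh, hpq, hsq⟩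
    obtain ⟨h', hh'mono, hh'pq, hsq'⟩ := exists_strictMono_semiconj_sq hfa hp hh.1 hpq hsq
    obtain ⟨k, hk⟩ := exists_orderIso_semiconj_of_semiconj_sq hfa hga hp hq hh'mono hh'pq hsq'
    exact ⟨k.toEquiv, k.isHomeo, hk⟩

/-- Two strictly decreasing homeomorphisms f, g of ℝ with fixed points p, q are conjugate
in H(ℝ) iff f² and g² are conjugate by a homeomorphism taking p to q. -/
theorem stmt_12 (f g : Equiv.Perm ℝ) (hf : IsHomeo f) (hg : IsHomeo g)
    (hfa : StrictAnti (⇑f)) (hga : StrictAnti (⇑g))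
    (p q : ℝ) (hp : f p = p) (hq : g q = q) :
    (∃ k : Equiv.Perm ℝ, IsHomeo k ∧ k * f * k⁻¹ = g) ↔
    (∃ h : Equiv.Perm ℝ, IsHomeo h ∧ h p = q ∧ h * (f * f) * h⁻¹ = g * g) :=
  stmt_12_general f g hfa hga p q hp hq
end

section
/- Suppose that f and h are strictly increasing homeomorphisms of ℝ satisfying h ∘ f ∘ h⁻¹ = f⁻¹. Then every fixed point of h is a fixed point of f: if h(p) = p then f(p) = p. -/
/-!
Since `h` fixes `p` and conjugates `f` to `f⁻¹`, it sends `f p` to `f⁻¹ p`. As `h` preserves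
order and fixes `p`, the points `f p` and `f⁻¹ p` lie on the same side of `p`; but for an
increasing `f` they lie on opposite sides unless `p` is fixed.
-/

namespace Equiv.Perm

variable {α : Type*}

theorem inv_apply_lt_iff_lt_apply [LinearOrder α] {f : Perm α} (hf : StrictMono f) (x : α) :
    f⁻¹ x < x ↔ x < f x := by
  rw [← hf.lt_iff_lt, coe_inv, apply_symm_apply]

theorem apply_apply_eq_of_mul_mul_inv_eq {f g h : Perm α} (hconj : h * f * h⁻¹ = g) {p : α}
    (hp : h p = p) : h (f p) = g p := by
  rw [← hconj, mul_apply, mul_apply, inv_eq_iff_eq.2 hp.symm]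

end Equiv.Perm

theorem stmt_13_general (f h : Equiv.Perm ℝ)
    (hfm : StrictMono (⇑f)) (hhm : StrictMono (⇑h))
    (hrev : h * f * h⁻¹ = f⁻¹) (p : ℝ) (hp : h p = p) :
    f p = p := by
  have hside : f p < p ↔ p < f p := by
    rw [← hhm.lt_iff_lt, Equiv.Perm.apply_apply_eq_of_mul_mul_inv_eq hrev hp, hp,
      Equiv.Perm.inv_apply_lt_iff_lt_apply hfm]
  rcases lt_trichotomy (f p) p with hlt | heq | hgt
  · exact absurd (hside.1 hlt) hlt.asymm
  · exact heq
  · exact absurd (hside.2 hgt) hgt.asymm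

/-- If f and h are strictly increasing homeomorphisms of ℝ with h f h⁻¹ = f⁻¹, then every
fixed point of h is a fixed point of f. -/
theorem stmt_13 (f h : Equiv.Perm ℝ) (hf : IsHomeo f) (hh : IsHomeo h)
    (hfm : StrictMono (⇑f)) (hhm : StrictMono (⇑h))
    (hrev : h * f * h⁻¹ = f⁻¹) (p : ℝ) (hp : h p = p) :
    f p = p :=
  stmt_13_general f h hfm hhm hrev p hp
end
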